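/- Assume n ≤ ⌊n'/2⌋. Then for every Λ ∈ S_{n,δ}, θ̄(Λ) is defined and θ̄(Λ) = θ_0(Λ). -/

import Mathlib

namespace PanUnitary

/-- `part μ i` : the `i`-th largest element (0-indexed) of the multiset `μ`, `0` beyond.
Viewing a multiset of naturals as a partition (identified up to trailing zeros),
this is the `(i+1)`-st part. -/
def part (μ : Multiset ℕ) (i : ℕ) : ℕ := ((μ.sort (· ≤ ·)).reverse).getD i 0

/-- Remove the zero parts: the canonical (zero-free) representative of a partition. -/
def strip (μ : Multiset ℕ) : Multiset ℕ := μ.filter (fun x => 0 < x)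

/-- `transpose μ j` is the `(j+1)`-st part of the transposed (conjugate) partition. -/
def transpose (μ : Multiset ℕ) (j : ℕ) : ℕ := (μ.filter (fun x => j < x)).card

/-- `Preceq f g` : the partition whose parts are given by `f` is `⪯` the one given by `g`,
i.e. `g i - 1 ≤ f i ≤ g i` for all `i`. -/
def Preceq (f g : ℕ → ℕ) : Prop := ∀ i, g i ≤ f i + 1 ∧ f i ≤ g i

/-- An integer `δ` is admissible if it is even and nonnegative, or odd and negative. -/
def IsAdmissible (δ : ℤ) : Prop := (Even δ ∧ 0 ≤ δ) ∨ (Odd δ ∧ δ < 0)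

/-- `ε = 1` if `δ` is even, `ε = 0` if `δ` is odd. -/
def eps (δ : ℤ) : ℕ := if Even δ then 1 else 0

/-- `d (d + 1) / 2` where `d = |δ|`. -/
def halfTri (δ : ℤ) : ℕ := δ.natAbs * (δ.natAbs + 1) / 2

/-- A symbol: a pair of rows of natural numbers (the strict-decrease condition is
part of the predicate `Symbol.IsUnitary`). -/
structure Symbol where
  A : List ℕ
  B : List ℕ

def Symbol.defect (Λ : Symbol) : ℤ := (Λ.A.length : ℤ) - (Λ.B.length : ℤ)

/-- The row `(a_1, …, a_m)` gives the partition with parts `(a_i - e)/2 - (m - i)`. -/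
def upsRow (L : List ℕ) (e : ℕ) : Multiset ℕ :=
  ((L.mapIdx fun i a => (a - e) / 2 - (L.length - 1 - i) : List ℕ) : Multiset ℕ)

/-- The bipartition `Υ(Λ)` (canonical zero-free representatives). -/
def Symbol.Upsilon (Λ : Symbol) : Multiset ℕ × Multiset ℕ :=
  (strip (upsRow Λ.A (eps Λ.defect)), strip (upsRow Λ.B (1 - eps Λ.defect)))

/-- `Λ` is a unitary-type symbol of (admissible) defect `δ`. -/
def Symbol.IsUnitary (Λ : Symbol) (δ : ℤ) : Prop :=
  Λ.A.Pairwise (· > ·) ∧ Λ.B.Pairwise (· > ·) ∧ Λ.defect = δ ∧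
    (∀ a ∈ Λ.A, a % 2 = eps δ) ∧ (∀ b ∈ Λ.B, b % 2 = 1 - eps δ)

/-- The rank `2(|μ| + |ν|) + d(d+1)/2` of a unitary-type symbol. -/
def Symbol.rank (Λ : Symbol) : ℕ :=
  2 * (Λ.Upsilon.1.sum + Λ.Upsilon.2.sum) + halfTri Λ.defect

/-- Equivalence of symbols: same defect and same `Υ`. -/
def Symbol.Equiv (Λ Λ' : Symbol) : Prop :=
  Λ.defect = Λ'.defect ∧ Λ.Upsilon = Λ'.Upsilon

/-- Membership in `S_{n,δ}`: a unitary-type symbol of admissible defect `δ` and rank `n`. -/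
def InS (n : ℕ) (δ : ℤ) (Λ : Symbol) : Prop :=
  IsAdmissible δ ∧ Λ.IsUnitary δ ∧ Λ.rank = n

/-- `Σ min(x,y)` over all unordered pairs of (positions of) entries of the list. -/
def pairMinSum : List ℕ → ℕ
  | [] => 0
  | x :: xs => (xs.map (fun y => min x y)).sum + pairMinSum xs

/-- All entries of a symbol (both rows). -/
def Symbol.entries (Λ : Symbol) : List ℕ := Λ.A ++ Λ.B

/-- `ord(Λ) = Σ min(x,y) − Σ_{i=1}^{⌊N/2⌋} (N − 2i)²`. -/
def Symbol.ord (Λ : Symbol) : ℤ :=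
  (pairMinSum Λ.entries : ℤ) -
    ∑ i ∈ Finset.Icc 1 (Λ.entries.length / 2),
      ((Λ.entries.length : ℤ) - 2 * (i : ℤ)) ^ 2

/-- The shift of a unitary-type symbol. -/
def Symbol.shift (Λ : Symbol) : Symbol :=
  ⟨Λ.A.map (fun a => a + 2) ++ [eps Λ.defect],
   Λ.B.map (fun b => b + 2) ++ [1 - eps Λ.defect]⟩

/-- The defect `δ'` for the second member of the dual pair. -/
def deltaPrime (n n' : ℕ) (δ : ℤ) : ℤ :=
  if Even (n + n') then (if δ = 0 then 0 else -δ + 1) else -δ - 1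

/-- `τ = ((n' − d'(d'+1)/2) − (n − d(d+1)/2)) / 2`. -/
def tau (n n' : ℕ) (δ : ℤ) : ℚ :=
  (((n' : ℚ) - (halfTri (deltaPrime n n' δ) : ℚ)) - ((n : ℚ) - (halfTri δ : ℚ))) / 2

/-- `τ` as a natural number (equal to `τ` whenever `τ` is a nonnegative integer). -/
def tauNat (n n' : ℕ) (δ : ℤ) : ℕ :=
  ((n' + halfTri δ) - (n + halfTri (deltaPrime n n' δ))) / 2

/-- The set of (canonical, zero-free) bipartitions `(μ;ν)` with
`2(|μ|+|ν|) + d(d+1)/2 = n`; equivalently `|μ|+|ν| = (n − d(d+1)/2)/2`. -/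
def BipSet (n : ℕ) (δ : ℤ) : Set (Multiset ℕ × Multiset ℕ) :=
  {p | (∀ x ∈ p.1, 0 < x) ∧ (∀ x ∈ p.2, 0 < x) ∧ 2 * (p.1.sum + p.2.sum) + halfTri δ = n}

/-- The `⪯`-conditions (on transposes) defining the relation `Θ`, at the level of
bipartitions `p = Υ(Λ)`, `q = Υ(Λ')`. -/
def PrecCond (n n' : ℕ) (p q : Multiset ℕ × Multiset ℕ) : Prop :=
  if Even (n + n') then
    Preceq (transpose p.2) (transpose q.1) ∧ Preceq (transpose q.2) (transpose p.1)
  else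
    Preceq (transpose p.1) (transpose q.2) ∧ Preceq (transpose q.1) (transpose p.2)

/-- `Θ` at the level of bipartitions (classes of symbols). -/
def ThetaB (n n' : ℕ) (δ : ℤ) (p q : Multiset ℕ × Multiset ℕ) : Prop :=
  q ∈ BipSet n' (deltaPrime n n' δ) ∧ PrecCond n n' p q

/-- `Λ' ∈ Θ(Λ)` for symbols, where `Λ ∈ S_{n,δ}`. -/
def InTheta (n n' : ℕ) (δ : ℤ) (Λ Λ' : Symbol) : Prop :=
  InS n' (deltaPrime n n' δ) Λ' ∧ PrecCond n n' Λ.Upsilon Λ'.Upsilon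

/-- `Λ' ∈ Θ(Λ)_k`. -/
def InThetaK (n n' : ℕ) (δ : ℤ) (k : ℕ) (Λ Λ' : Symbol) : Prop :=
  InTheta n n' δ Λ Λ' ∧
    (if Even (n + n') then (Λ'.Upsilon.2.sum : ℤ) = (Λ.Upsilon.1.sum : ℤ) - (k : ℤ)
     else (Λ'.Upsilon.1.sum : ℤ) = (Λ.Upsilon.2.sum : ℤ) - (k : ℤ))

/-- Remove (one copy of) the largest part. -/
def mtail (μ : Multiset ℕ) : Multiset ℕ := μ.erase (part μ 0)

/-- `θ_k` at the level of bipartitions: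
even case: `(μ;ν) ↦ (sort(ν, τ+k); sort(μ_2, …, μ_{m_1}, μ_1 − k))`;
odd case: `(μ;ν) ↦ (sort(ν_2, …, ν_{m_2}, ν_1 − k); sort(μ, τ+k))`. -/
def thetaBip (n n' : ℕ) (δ : ℤ) (k : ℕ) (p : Multiset ℕ × Multiset ℕ) :
    Multiset ℕ × Multiset ℕ :=
  if Even (n + n') then
    (strip ((tauNat n n' δ + k) ::ₘ p.2), strip ((part p.1 0 - k) ::ₘ mtail p.1))
  else
    (strip ((part p.2 0 - k) ::ₘ mtail p.2), strip ((tauNat n n' δ + k) ::ₘ p.1))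

/-- The unitary-type symbol of defect `δ` with `Υ = p`, whose first row has `m1`
entries and second row `m2` entries (valid whenever `m1, m2` are large enough). -/
def symbolOfBip (δ : ℤ) (p : Multiset ℕ × Multiset ℕ) (m1 m2 : ℕ) : Symbol :=
  ⟨List.ofFn (fun i : Fin m1 => 2 * (part p.1 (i : ℕ) + (m1 - 1 - (i : ℕ))) + eps δ),
   List.ofFn (fun j : Fin m2 => 2 * (part p.2 (j : ℕ) + (m2 - 1 - (j : ℕ))) + (1 - eps δ))⟩

/-- A canonical representative symbol of defect `δ` with `Υ = p`. -/
def canonicalSymbol (δ : ℤ) (p : Multiset ℕ × Multiset ℕ) : Symbol :=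
  symbolOfBip δ p (max p.1.card ((p.2.card : ℤ) + δ).toNat)
    (((max p.1.card ((p.2.card : ℤ) + δ).toNat : ℤ) - δ).toNat)

/-- A symbol representing the class `θ_k(Λ)`. -/
def thetaSymbol (n n' : ℕ) (δ : ℤ) (k : ℕ) (Λ : Symbol) : Symbol :=
  canonicalSymbol (deltaPrime n n' δ) (thetaBip n n' δ k Λ.Upsilon)

/-- `K(Λ)`: `μ_1` in the even case, `ν_1` in the odd case. -/
def bigK (n n' : ℕ) (Λ : Symbol) : ℕ :=
  if Even (n + n') then part Λ.Upsilon.1 0 else part Λ.Upsilon.2 0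

/-- `ord` at the level of bipartitions (well defined on classes). -/
def ordB (δ : ℤ) (p : Multiset ℕ × Multiset ℕ) : ℤ := (canonicalSymbol δ p).ord

/-- Strict lexicographic order on partitions. -/
def PartLexLt (μ ν : Multiset ℕ) : Prop :=
  ∃ i, (∀ j < i, part μ j = part ν j) ∧ part μ i < part ν i

/-- The total order on `S_{n,δ}` (and on `S_{n',δ'}`), at the level of bipartitions;
it depends only on the parity of `n + n'`. -/
def BLt (n n' : ℕ) (p q : Multiset ℕ × Multiset ℕ) : Prop :=
  if Even (n + n') then
    p.1.sum < q.1.sum ∨ (p.1.sum = q.1.sum ∧ PartLexLt p.1 q.1) ∨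
      (p.1 = q.1 ∧ PartLexLt p.2 q.2)
  else
    p.2.sum < q.2.sum ∨ (p.2.sum = q.2.sum ∧ PartLexLt p.2 q.2) ∨
      (p.2 = q.2 ∧ PartLexLt p.1 q.1)

/-- `q ∈ Θ♭(p)` relative to a given partial function `bar` (playing the role of `θ̄`). -/
def InFlat (n n' : ℕ) (δ : ℤ)
    (bar : Multiset ℕ × Multiset ℕ → Option (Multiset ℕ × Multiset ℕ))
    (p q : Multiset ℕ × Multiset ℕ) : Prop :=
  ThetaB n n' δ p q ∧ ∀ r ∈ BipSet n δ, BLt n n' r p → bar r ≠ some q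

/-- `bar` is the partial function `θ̄` defined by recursion along the total order:
on each `p ∈ S_{n,δ}`, if `Θ♭(p) ≠ ∅` then `bar p` is defined and is the smallest
element (w.r.t. the total order) of maximal `ord` in `Θ♭(p)`. -/
def IsThetaBar (n n' : ℕ) (δ : ℤ)
    (bar : Multiset ℕ × Multiset ℕ → Option (Multiset ℕ × Multiset ℕ)) : Prop :=
  (∀ p, p ∉ BipSet n δ → bar p = none) ∧
  ∀ p ∈ BipSet n δ,
    ((∃ q, InFlat n n' δ bar p q) → ∃ q, bar p = some q) ∧
    ∀ q, bar p = some q →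
      InFlat n n' δ bar p q ∧
      (∀ r, InFlat n n' δ bar p r →
        ordB (deltaPrime n n' δ) r ≤ ordB (deltaPrime n n' δ) q) ∧
      (∀ r, InFlat n n' δ bar p r →
        ordB (deltaPrime n n' δ) r = ordB (deltaPrime n n' δ) q → r ≠ q → BLt n n' q r)


/-!
In the stable range `2n ≤ n'` the integer `τ` is at least `|μ| + |ν|`. Hence `θ₀(Λ)`, which adds
a part `τ` to `ν` (resp. `μ`), lies in `Θ(Λ)`, and in its symbol the entry coming from `τ`
dominates all the others. The interlacing conditions defining `Θ(Λ)` bound every other entry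
of a symbol `Λ' ∈ Θ(Λ)` by the corresponding entry of `θ₀(Λ)`; since `Σ min(x, y)` is monotone
and a dominating entry contributes the full sum of the others, comparing total sums gives
`ord Λ' < ord θ₀(Λ)` unless `Λ' = θ₀(Λ)`. As `θ₀` is injective, induction along the total order
shows that `θ₀(Λ)` is never removed from `Θ♭(Λ)`, so it is the choice `θ̄(Λ)`.
-/

section Partition

lemma lt_getD_iff_lt_countP {l : List ℕ} (hl : l.Pairwise (· ≥ ·)) (j t : ℕ) :
    t < l.getD j 0 ↔ j < l.countP (fun x => t < x) := by
  induction l generalizing j with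
  | nil => simp
  | cons x xs ih =>
    rw [List.pairwise_cons] at hl
    by_cases hx : t < x
    · cases j with
      | zero => simp [hx]
      | succ j => rw [List.getD_cons_succ, ih hl.2 j, List.countP_cons]; simp [hx]
    · have hxs : xs.countP (fun y => t < y) = 0 :=
        List.countP_eq_zero.2 fun y hy => by
          simp only [decide_eq_true_eq]
          have := hl.1 y hy
          omega
      have hget : ∀ j, xs.getD j 0 ≤ x := fun j => by
        rcases lt_or_ge j xs.length with hj | hj
        · rw [List.getD_eq_getElem _ _ hj]; exact hl.1 _ (List.getElem_mem hj)
        · rw [List.getD_eq_default _ _ hj]; exact Nat.zero_le x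
      cases j with
      | zero => simp [hx, hxs]
      | succ j =>
        have := hget j
        rw [List.getD_cons_succ, List.countP_cons, hxs]
        exact ⟨fun h => by omega, fun h => by simp [hx] at h⟩

lemma coe_sort_reverse (μ : Multiset ℕ) :
    (((μ.sort (· ≤ ·)).reverse : List ℕ) : Multiset ℕ) = μ := by
  rw [Multiset.coe_reverse, Multiset.sort_eq]

lemma part_lt_iff (μ : Multiset ℕ) (j t : ℕ) : t < part μ j ↔ j < transpose μ t := by
  have hsorted : ((μ.sort (· ≤ ·)).reverse).Pairwise (· ≥ ·) :=
    List.pairwise_reverse.2 (μ.pairwise_sort (· ≤ ·))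
  rw [part, lt_getD_iff_lt_countP hsorted, transpose, List.countP_eq_length_filter]
  conv_rhs => rw [← coe_sort_reverse μ, Multiset.filter_coe, Multiset.coe_card]

lemma part_antitone (μ : Multiset ℕ) : Antitone (part μ) := fun j k hjk =>
  le_of_forall_lt fun t ht => (part_lt_iff μ j t).2 (hjk.trans_lt ((part_lt_iff μ k t).1 ht))

lemma transpose_le_card (μ : Multiset ℕ) (t : ℕ) : transpose μ t ≤ μ.card :=
  Multiset.card_le_card (Multiset.filter_le _ μ)

lemma part_eq_zero_of_card_le {μ : Multiset ℕ} {j : ℕ} (h : μ.card ≤ j) : part μ j = 0 := by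
  by_contra h0
  have := (part_lt_iff μ j 0).1 (Nat.pos_of_ne_zero h0)
  have := transpose_le_card μ 0
  omega

lemma lt_card_of_part_pos {μ : Multiset ℕ} {j : ℕ} (h : 0 < part μ j) : j < μ.card :=
  ((part_lt_iff μ j 0).1 h).trans_le (transpose_le_card μ 0)

lemma part_mem {μ : Multiset ℕ} {j : ℕ} (h : j < μ.card) : part μ j ∈ μ := by
  have hlen : j < ((μ.sort (· ≤ ·)).reverse).length := by simpa using h
  have hmem := List.getElem_mem hlen
  rw [← Multiset.mem_coe, coe_sort_reverse] at hmem
  rwa [part, List.getD_eq_getElem _ _ hlen]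

lemma part_le_sum (μ : Multiset ℕ) (j : ℕ) : part μ j ≤ μ.sum := by
  rcases Nat.eq_zero_or_pos (part μ j) with h | h
  · exact h ▸ Nat.zero_le _
  · exact Multiset.le_sum_of_mem (part_mem (lt_card_of_part_pos h))

lemma part_add_le_of_transpose_le {μ ν : Multiset ℕ} {k : ℕ}
    (h : ∀ t, transpose μ t ≤ transpose ν t + k) (j : ℕ) : part μ (j + k) ≤ part ν j :=
  le_of_forall_lt fun t ht => (part_lt_iff ν j t).2 <| by
    have := (part_lt_iff μ (j + k) t).1 ht
    have := h t
    omega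

lemma le_part_zero_of_mem {μ : Multiset ℕ} {x : ℕ} (hx : x ∈ μ) : x ≤ part μ 0 := by
  by_contra h
  have : 0 < transpose μ (part μ 0) :=
    Multiset.card_pos_iff_exists_mem.2 ⟨x, Multiset.mem_filter.2 ⟨hx, by omega⟩⟩
  exact lt_irrefl _ ((part_lt_iff μ 0 _).2 this)

lemma transpose_cons (a : ℕ) (μ : Multiset ℕ) (t : ℕ) :
    transpose (a ::ₘ μ) t = (if t < a then 1 else 0) + transpose μ t := by
  by_cases h : t < a <;> simp [transpose, h, Nat.add_comm]

lemma part_cons_zero {a : ℕ} {μ : Multiset ℕ} (h : part μ 0 ≤ a) : part (a ::ₘ μ) 0 = a :=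
  eq_of_forall_lt_iff fun t => by
    rw [part_lt_iff, transpose_cons]
    have := part_lt_iff μ 0 t
    split_ifs <;> omega

lemma part_cons_succ {a : ℕ} {μ : Multiset ℕ} (h : part μ 0 ≤ a) (j : ℕ) :
    part (a ::ₘ μ) (j + 1) = part μ j :=
  eq_of_forall_lt_iff fun t => by
    rw [part_lt_iff, transpose_cons, part_lt_iff]
    have := part_lt_iff μ 0 t
    split_ifs <;> omega

lemma part_mtail (μ : Multiset ℕ) (j : ℕ) : part (mtail μ) j = part μ (j + 1) := by
  rcases Multiset.empty_or_exists_mem μ with rfl | ⟨x, hx⟩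
  · simp only [mtail, Multiset.erase_zero]
    rw [part_eq_zero_of_card_le (by simp), part_eq_zero_of_card_le (by simp)]
  · have hμ : part μ 0 ::ₘ mtail μ = μ :=
      Multiset.cons_erase (part_mem (Multiset.card_pos_iff_exists_mem.2 ⟨x, hx⟩))
    conv_rhs => rw [← hμ]
    refine (part_cons_succ ?_ j).symm
    rcases Nat.eq_zero_or_pos (part (mtail μ) 0) with h | h
    · omega
    · exact le_part_zero_of_mem (Multiset.mem_of_mem_erase (part_mem (lt_card_of_part_pos h)))

lemma sum_range_part {μ : Multiset ℕ} {m : ℕ} (hm : μ.card ≤ m) :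
    ∑ i ∈ Finset.range m, part μ i = μ.sum := by
  have key : ∀ (l : List ℕ) (m : ℕ), l.length ≤ m →
      ∑ i ∈ Finset.range m, l.getD i 0 = l.sum := by
    intro l
    induction l with
    | nil => simp
    | cons x xs ih =>
      rintro (_ | m) hm
      · simp at hm
      · rw [Finset.sum_range_succ', List.sum_cons, add_comm]
        simpa using ih m (by simpa using hm)
  conv_rhs => rw [← coe_sort_reverse μ]
  rw [Multiset.sum_coe]
  exact key _ m (by simpa using hm)

lemma card_le_sum_of_pos {μ : Multiset ℕ} (h : ∀ x ∈ μ, 0 < x) : μ.card ≤ μ.sum := by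
  simpa using Multiset.card_nsmul_le_sum (a := 1) h

lemma sum_le_sum_of_part_le {μ ν : Multiset ℕ} (h : ∀ i, part μ i ≤ part ν i) :
    μ.sum ≤ ν.sum := by
  rw [← sum_range_part (le_add_right le_rfl : μ.card ≤ μ.card + ν.card),
    ← sum_range_part (le_add_left le_rfl : ν.card ≤ μ.card + ν.card)]
  exact Finset.sum_le_sum fun i _ => h i

lemma card_eq_of_part_eq {μ ν : Multiset ℕ} (hμ : ∀ x ∈ μ, 0 < x) (hν : ∀ x ∈ ν, 0 < x)
    (h : ∀ i, part μ i = part ν i) : μ.card = ν.card := by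
  have key : ∀ {ξ : Multiset ℕ}, (∀ x ∈ ξ, 0 < x) → ∀ j, j < ξ.card ↔ 0 < part ξ j :=
    fun hξ j => ⟨fun hj => hξ _ (part_mem hj), lt_card_of_part_pos⟩
  exact eq_of_forall_lt_iff fun j => by rw [key hμ, key hν, h]

lemma eq_of_part_eq {μ ν : Multiset ℕ} (hμ : ∀ x ∈ μ, 0 < x) (hν : ∀ x ∈ ν, 0 < x)
    (h : ∀ i, part μ i = part ν i) : μ = ν := by
  rw [← coe_sort_reverse μ, ← coe_sort_reverse ν, Multiset.coe_eq_coe]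
  have hlen : ((μ.sort (· ≤ ·)).reverse).length = ((ν.sort (· ≤ ·)).reverse).length := by
    simpa using card_eq_of_part_eq hμ hν h
  refine List.Perm.of_eq (List.ext_getElem hlen fun i h1 h2 => ?_)
  have := h i
  rwa [part, part, List.getD_eq_getElem _ _ h1, List.getD_eq_getElem _ _ h2] at this

lemma eq_of_part_le_of_sum_le {μ ν : Multiset ℕ} (hμ : ∀ x ∈ μ, 0 < x) (hν : ∀ x ∈ ν, 0 < x)
    (h : ∀ i, part μ i ≤ part ν i) (hsum : ν.sum ≤ μ.sum) : μ = ν := by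
  refine eq_of_part_eq hμ hν fun i => ?_
  set M := μ.card + ν.card + i + 1
  have hsum' : ∑ j ∈ Finset.range M, part μ j = ∑ j ∈ Finset.range M, part ν j := by
    rw [sum_range_part (by omega), sum_range_part (by omega)]
    exact le_antisymm (sum_le_sum_of_part_le h) hsum
  exact (Finset.sum_eq_sum_iff_of_le fun j _ => h j).1 hsum' i (Finset.mem_range.2 (by omega))

lemma transpose_strip (μ : Multiset ℕ) (t : ℕ) : transpose (strip μ) t = transpose μ t := by
  rw [transpose, strip, Multiset.filter_filter, transpose]
  exact congrArg _ (Multiset.filter_congr fun x _ => by simp only [and_iff_left_iff_imp]; omega)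

lemma part_strip (μ : Multiset ℕ) (j : ℕ) : part (strip μ) j = part μ j :=
  eq_of_forall_lt_iff fun t => by rw [part_lt_iff, part_lt_iff, transpose_strip]

lemma pos_of_mem_strip {μ : Multiset ℕ} {x : ℕ} (h : x ∈ strip μ) : 0 < x :=
  Multiset.of_mem_filter h

lemma strip_eq_self {μ : Multiset ℕ} (h : ∀ x ∈ μ, 0 < x) : strip μ = μ :=
  Multiset.filter_eq_self.2 h

lemma sum_strip (μ : Multiset ℕ) : (strip μ).sum = μ.sum := by
  conv_rhs => rw [← Multiset.filter_add_not (fun x => 0 < x) μ]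
  rw [Multiset.sum_add, strip, left_eq_add]
  exact Multiset.sum_eq_zero fun x hx => by have := Multiset.of_mem_filter hx; omega

lemma strip_cons_mtail (μ : Multiset ℕ) : strip (part μ 0 ::ₘ mtail μ) = strip μ := by
  rcases Multiset.empty_or_exists_mem μ with rfl | ⟨x, hx⟩
  · rw [mtail, part_eq_zero_of_card_le (by simp)]
    simp [strip]
  · rw [mtail, Multiset.cons_erase (part_mem (Multiset.card_pos_iff_exists_mem.2 ⟨x, hx⟩))]

lemma strip_cons_injective {a : ℕ} {μ ν : Multiset ℕ} (h : strip (a ::ₘ μ) = strip (a ::ₘ ν)) :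
    strip μ = strip ν := by
  simp only [strip, Multiset.filter_cons] at h
  exact add_left_cancel h

end Partition

section PairMinSum

lemma pairMinSum_cons (x : ℕ) (L : List ℕ) :
    pairMinSum (x :: L) = (L.map fun y => min x y).sum + pairMinSum L := rfl

lemma pairMinSum_perm {L L' : List ℕ} (h : L.Perm L') : pairMinSum L = pairMinSum L' := by
  induction h with
  | nil => rfl
  | cons x hL ih => rw [pairMinSum_cons, pairMinSum_cons, ih, (hL.map _).sum_eq]
  | swap x y L =>
    simp only [pairMinSum_cons, List.map_cons, List.sum_cons, min_comm x y]
    omega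
  | trans _ _ ih₁ ih₂ => exact ih₁.trans ih₂

lemma sum_map_min_of_le {c : ℕ} {L : List ℕ} (h : ∀ y ∈ L, c ≤ y) :
    (L.map fun y => min c y).sum = c * L.length := by
  rw [List.map_congr_left fun y hy => min_eq_left (h y hy), List.map_const', List.sum_replicate,
    smul_eq_mul, mul_comm]

lemma two_mul_choose_two_add (N : ℕ) : 2 * N.choose 2 + N = N ^ 2 := by
  induction N with
  | zero => rfl
  | succ N ih => rw [Nat.choose_succ_succ', Nat.choose_one_right]; nlinarith

lemma pairMinSum_map_add (k : ℕ) (L : List ℕ) :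
    pairMinSum (L.map (· + k)) = pairMinSum L + k * L.length.choose 2 := by
  induction L with
  | nil => rfl
  | cons x L ih =>
    have hmin : ((L.map (· + k)).map fun y => min (x + k) y).sum
        = (L.map fun y => min x y).sum + k * L.length := by
      simp [Function.comp_def, min_add_add_right, List.sum_map_add, mul_comm]
    rw [List.map_cons, pairMinSum_cons, pairMinSum_cons, hmin, ih, List.length_cons,
      Nat.choose_succ_succ', Nat.choose_one_right]
    ring

lemma pairMinSum_mono {L L' : List ℕ} (h : List.Forall₂ (· ≤ ·) L L') :
    pairMinSum L ≤ pairMinSum L' := by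
  induction h with
  | nil => exact le_rfl
  | @cons a b l l' hab hl ih =>
    have : (l.map fun y => min a y).sum ≤ (l'.map fun y => min b y).sum :=
      List.Forall₂.sum_le_sum <| List.forall₂_map_left_iff.2 <| List.forall₂_map_right_iff.2 <|
        hl.imp fun _ _ h => min_le_min hab h
    rw [pairMinSum_cons, pairMinSum_cons]
    omega

/-- A dominating entry `x'` contributes the full sum of `L'`, while `x` contributes at most the
sum of `L`. -/
lemma pairMinSum_cons_add_sum_le {x x' : ℕ} {L L' : List ℕ} (h : List.Forall₂ (· ≤ ·) L L')
    (hx' : ∀ y ∈ L', y ≤ x') : pairMinSum (x :: L) + L'.sum ≤ pairMinSum (x' :: L') + L.sum := by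
  have hx : (L.map fun y => min x y).sum ≤ L.sum :=
    List.Forall₂.sum_le_sum <| List.forall₂_map_left_iff.2 <|
      List.forall₂_same.2 fun y _ => min_le_right x y
  have hx'_sum : (L'.map fun y => min x' y).sum = L'.sum := by
    rw [List.map_congr_left fun y hy => min_eq_right (hx' y hy), List.map_id']
  have := pairMinSum_mono h
  rw [pairMinSum_cons, pairMinSum_cons, hx'_sum]
  omega

lemma pairMinSum_shift {A B : List ℕ} {e e' : ℕ} (he : e + e' = 1) :
    pairMinSum ((A.map (· + 2) ++ [e]) ++ (B.map (· + 2) ++ [e']))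
      = pairMinSum (A ++ B) + (A ++ B).length ^ 2 := by
  have hperm : ((A.map (· + 2) ++ [e]) ++ (B.map (· + 2) ++ [e'])).Perm
      (e :: e' :: (A ++ B).map (· + 2)) := by
    rw [← Multiset.coe_eq_coe]
    simp only [← Multiset.coe_add, ← Multiset.cons_coe, List.map_append]
    simp [add_comm]
  have hle : ∀ c ≤ 1, ∀ y ∈ (A ++ B).map (· + 2), c ≤ y := fun c hc y hy => by
    obtain ⟨z, -, rfl⟩ := List.mem_map.1 hy
    omega
  have hN : e * (A ++ B).length + e' * (A ++ B).length = (A ++ B).length := by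
    rw [← add_mul, he, one_mul]
  have := two_mul_choose_two_add (A ++ B).length
  rw [pairMinSum_perm hperm, pairMinSum_cons, pairMinSum_cons, List.map_cons, List.sum_cons,
    sum_map_min_of_le (hle e (by omega)), sum_map_min_of_le (hle e' (by omega)),
    pairMinSum_map_add, List.length_map]
  omega

end PairMinSum

section SymbolRows

lemma eps_eq_one_sub_emod_two (x : ℤ) : (eps x : ℤ) = 1 - x % 2 := by
  unfold eps
  split_ifs with h
  · have := Int.even_iff.1 h
    push_cast
    omega
  · have := Int.not_even_iff.1 h
    push_cast
    omega

lemma eps_le_one (x : ℤ) : eps x ≤ 1 := by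
  have := eps_eq_one_sub_emod_two x
  omega

def row (μ : Multiset ℕ) (m e : ℕ) : List ℕ :=
  List.ofFn fun i : Fin m => 2 * (part μ i + (m - 1 - i)) + e

lemma entries_symbolOfBip (δ : ℤ) (p : Multiset ℕ × Multiset ℕ) (m₁ m₂ : ℕ) :
    (symbolOfBip δ p m₁ m₂).entries = row p.1 m₁ (eps δ) ++ row p.2 m₂ (1 - eps δ) := rfl

lemma length_row (μ : Multiset ℕ) (m e : ℕ) : (row μ m e).length = m := List.length_ofFn

lemma row_succ (μ : Multiset ℕ) (m e : ℕ) :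
    row μ (m + 1) e = (2 * (part μ 0 + m) + e) :: row (mtail μ) m e := by
  simp only [row, List.ofFn_succ, Fin.val_zero, Fin.val_succ, part_mtail]
  congr 3 with i
  omega

lemma forall₂_row {μ ν : Multiset ℕ} (h : ∀ i, part μ i ≤ part ν i) (m e : ℕ) :
    List.Forall₂ (· ≤ ·) (row μ m e) (row ν m e) :=
  List.forall₂_iff_get.2 ⟨by simp [length_row], fun i h₁ _ => by
    simp only [row, List.get_eq_getElem, List.getElem_ofFn]
    have := h i
    omega⟩

lemma le_of_mem_row {μ : Multiset ℕ} {m e y : ℕ} (hy : y ∈ row μ m e) :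
    y ≤ 2 * (part μ 0 + (m - 1)) + e := by
  obtain ⟨i, rfl⟩ := List.mem_ofFn.1 hy
  have := part_antitone μ (Nat.zero_le i)
  omega

lemma row_succ_of_card_le {μ : Multiset ℕ} {m : ℕ} (e : ℕ) (h : μ.card ≤ m) :
    row μ (m + 1) e = (row μ m e).map (· + 2) ++ [e] := by
  rw [row, row, List.ofFn_succ', List.concat_eq_append, List.map_ofFn]
  congr 1
  · exact congrArg List.ofFn <| funext fun i => by
      simp only [Function.comp, Fin.val_castSucc]
      omega
  · simp [part_eq_zero_of_card_le h]

lemma sum_row {μ : Multiset ℕ} {m : ℕ} (e : ℕ) (h : μ.card ≤ m) :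
    (row μ m e).sum = 2 * μ.sum + (row 0 m e).sum := by
  have h0 : ∀ i, part (0 : Multiset ℕ) i = 0 := fun i => part_eq_zero_of_card_le (by simp)
  simp only [row, List.sum_ofFn, h0]
  rw [← sum_range_part h, ← Fin.sum_univ_eq_sum_range, Finset.mul_sum, ← Finset.sum_add_distrib]
  exact Finset.sum_congr rfl fun i _ => by ring

lemma sum_Icc_one_succ (g : ℕ → ℤ) (k : ℕ) :
    ∑ i ∈ Finset.Icc 1 (k + 1), g i = g 1 + ∑ i ∈ Finset.Icc 1 k, g (i + 1) := by
  rw [← Finset.insert_Icc_add_one_left_eq_Icc (by omega), Finset.sum_insert (by simp),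
    ← Finset.map_add_right_Icc, Finset.sum_map]
  rfl

lemma sum_Icc_sq_add_two (N : ℕ) :
    ∑ i ∈ Finset.Icc 1 ((N + 2) / 2), (((N + 2 : ℕ) : ℤ) - 2 * (i : ℤ)) ^ 2
      = (N : ℤ) ^ 2 + ∑ i ∈ Finset.Icc 1 (N / 2), ((N : ℤ) - 2 * (i : ℤ)) ^ 2 := by
  rw [show (N + 2) / 2 = N / 2 + 1 by omega, sum_Icc_one_succ]
  push_cast
  congr 1
  · ring
  · exact Finset.sum_congr rfl fun i _ => by ring

lemma ord_symbolOfBip_succ (δ : ℤ) {p : Multiset ℕ × Multiset ℕ} {m₁ m₂ : ℕ}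
    (h₁ : p.1.card ≤ m₁) (h₂ : p.2.card ≤ m₂) :
    (symbolOfBip δ p (m₁ + 1) (m₂ + 1)).ord = (symbolOfBip δ p m₁ m₂).ord := by
  have he : eps δ + (1 - eps δ) = 1 := by have := eps_le_one δ; omega
  rw [Symbol.ord, Symbol.ord, entries_symbolOfBip, entries_symbolOfBip, row_succ_of_card_le _ h₁,
    row_succ_of_card_le _ h₂, pairMinSum_shift he]
  have hlen : ((row p.1 m₁ (eps δ)).map (· + 2) ++ [eps δ] ++
      ((row p.2 m₂ (1 - eps δ)).map (· + 2) ++ [1 - eps δ])).length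
        = (row p.1 m₁ (eps δ) ++ row p.2 m₂ (1 - eps δ)).length + 2 := by
    simp only [List.length_append, List.length_map, List.length_singleton]
    omega
  rw [hlen, sum_Icc_sq_add_two]
  push_cast
  ring

lemma ordB_eq_ord_symbolOfBip (δ : ℤ) (p : Multiset ℕ × Multiset ℕ) {m : ℕ}
    (hm : max p.1.card ((p.2.card + δ).toNat) ≤ m) :
    ordB δ p = (symbolOfBip δ p m ((m - δ).toNat)).ord := by
  induction m, hm using Nat.le_induction with
  | base => rw [ordB, canonicalSymbol, Nat.cast_max]
  | succ m hm ih =>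
    rw [ih, show ((m + 1 : ℕ) - δ : ℤ).toNat = ((m : ℤ) - δ).toNat + 1 by omega,
      ord_symbolOfBip_succ δ (by omega) (by omega)]

lemma pairMinSum_rows_add_le {μ μ' ν ν' : Multiset ℕ} {m l e e' : ℕ}
    (hμ : μ.card ≤ m + 1) (hμ' : μ'.card ≤ m + 1) (hν : ν.card ≤ l) (hν' : ν'.card ≤ l)
    (hμμ' : ∀ i, part μ (i + 1) ≤ part μ' (i + 1)) (hνν' : ∀ j, part ν j ≤ part ν' j)
    (hsum : μ.sum + ν.sum = μ'.sum + ν'.sum)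
    (hdom : 2 * (part ν' 0 + (l - 1)) + e' ≤ 2 * (part μ' 0 + m) + e) :
    pairMinSum (row μ (m + 1) e ++ row ν l e') + 2 * part μ 0 ≤
      pairMinSum (row μ' (m + 1) e ++ row ν' l e') + 2 * part μ' 0 := by
  have htotal : (row μ (m + 1) e ++ row ν l e').sum = (row μ' (m + 1) e ++ row ν' l e').sum := by
    rw [List.sum_append, List.sum_append, sum_row e hμ, sum_row e hμ', sum_row e' hν,
      sum_row e' hν']
    omega
  rw [row_succ, row_succ, List.cons_append, List.cons_append] at htotal ⊢
  have hdom' : ∀ y ∈ row (mtail μ') m e ++ row ν' l e', y ≤ 2 * (part μ' 0 + m) + e := by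
    intro y hy
    rcases List.mem_append.1 hy with hy | hy
    · have h₁ := le_of_mem_row hy
      have h₂ := part_antitone μ' (Nat.zero_le (0 + 1))
      rw [part_mtail] at h₁
      omega
    · have := le_of_mem_row hy
      omega
  have key := pairMinSum_cons_add_sum_le (x := 2 * (part μ 0 + m) + e)
    (L := row (mtail μ) m e ++ row ν l e')
    (List.rel_append (forall₂_row (fun i => by rw [part_mtail, part_mtail]; exact hμμ' i) m e)
      (forall₂_row hνν' l e')) hdom'
  beta_reduce at key
  rw [List.sum_cons, List.sum_cons] at htotal
  omega

lemma ordB_add_le_of_dominant_fst {δ : ℤ} {μ μ' ν ν' : Multiset ℕ}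
    (hμ : ∀ i, part μ (i + 1) ≤ part μ' (i + 1)) (hν : ∀ j, part ν j ≤ part ν' j)
    (hsum : μ.sum + ν.sum = μ'.sum + ν'.sum)
    (hdom : 2 * (part ν' 0 : ℤ) + 1 ≤ 2 * part μ' 0 + 2 * δ + 2 * eps δ) :
    ordB δ (μ, ν) + 2 * part μ 0 ≤ ordB δ (μ', ν') + 2 * part μ' 0 := by
  set M := μ.card + μ'.card + ν.card + ν'.card + δ.natAbs
  rw [ordB_eq_ord_symbolOfBip δ (μ, ν) (m := M + 1) (by simp only; omega),
    ordB_eq_ord_symbolOfBip δ (μ', ν') (m := M + 1) (by simp only; omega)]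
  set l := ((M + 1 : ℕ) - δ : ℤ).toNat
  have he := eps_le_one δ
  have key := pairMinSum_rows_add_le (m := M) (l := l) (e := eps δ)
    (e' := 1 - eps δ) (by omega) (by omega) (by omega) (by omega) hμ hν hsum (by omega)
  simp only [Symbol.ord, entries_symbolOfBip, List.length_append, length_row]
  push_cast
  omega

lemma ordB_add_le_of_dominant_snd {δ : ℤ} {μ μ' ν ν' : Multiset ℕ}
    (hμ : ∀ i, part μ (i + 1) ≤ part μ' (i + 1)) (hν : ∀ j, part ν j ≤ part ν' j)
    (hsum : μ.sum + ν.sum = μ'.sum + ν'.sum)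
    (hdom : 2 * (part ν' 0 : ℤ) + 2 * eps δ ≤ 2 * part μ' 0 + 1 - 2 * δ) :
    ordB δ (ν, μ) + 2 * part μ 0 ≤ ordB δ (ν', μ') + 2 * part μ' 0 := by
  set M := μ.card + μ'.card + ν.card + ν'.card + δ.natAbs
  obtain ⟨k, hk⟩ : ∃ k, ((M + 1 : ℕ) - δ : ℤ).toNat = k + 1 :=
    ⟨_, (Nat.succ_pred_eq_of_pos (by omega)).symm⟩
  rw [ordB_eq_ord_symbolOfBip δ (ν, μ) (m := M + 1) (by simp only; omega),
    ordB_eq_ord_symbolOfBip δ (ν', μ') (m := M + 1) (by simp only; omega), hk]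
  have he := eps_le_one δ
  have key := pairMinSum_rows_add_le (m := k) (l := M + 1) (e := 1 - eps δ) (e' := eps δ)
    (by omega) (by omega) (by omega) (by omega) hμ hν (by omega) (by omega)
  rw [pairMinSum_perm (List.perm_append_comm (l₁ := row μ (k + 1) _)),
    pairMinSum_perm (List.perm_append_comm (l₁ := row μ' (k + 1) _))] at key
  simp only [Symbol.ord, entries_symbolOfBip, List.length_append, length_row]
  push_cast
  omega

end SymbolRows

section StableRange

lemma halfTri_of_natAbs_eq_succ {x y : ℤ} (h : x.natAbs = y.natAbs + 1) :
    halfTri x = halfTri y + x.natAbs := by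
  unfold halfTri
  rw [h, show (y.natAbs + 1) * (y.natAbs + 1 + 1) = y.natAbs * (y.natAbs + 1) + 2 * (y.natAbs + 1)
    by ring, Nat.add_mul_div_left _ _ two_pos]

lemma natAbs_le_halfTri (x : ℤ) : x.natAbs ≤ halfTri x := by
  unfold halfTri
  rw [Nat.le_div_iff_mul_le two_pos]
  rcases x.natAbs with _ | k
  · rfl
  · nlinarith

lemma halfTri_of_natAbs_eq_zero {x : ℤ} (h : x.natAbs = 0) : halfTri x = 0 := by
  simp [halfTri, h]

/-- The first identity says that `τ` is an integer; the last two inequalities make the entry of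
`θ₀(Λ)` coming from `τ` dominate the other row of its symbol. -/
lemma stable_range_tauNat {n n' s : ℕ} {δ : ℤ} (hδ : IsAdmissible δ) (hstable : 2 * n ≤ n')
    (hn : n = 2 * s + halfTri δ) :
    2 * tauNat n n' δ + n + halfTri (deltaPrime n n' δ) = n' + halfTri δ ∧ s ≤ tauNat n n' δ ∧
      (Even (n + n') → 2 * (s : ℤ) + 1 ≤
        2 * tauNat n n' δ + 2 * deltaPrime n n' δ + 2 * eps (deltaPrime n n' δ)) ∧
      (¬ Even (n + n') → 2 * (s : ℤ) + 2 * eps (deltaPrime n n' δ) ≤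
        2 * tauNat n n' δ + 1 - 2 * deltaPrime n n' δ) := by
  have hle := natAbs_le_halfTri δ
  have heps := eps_eq_one_sub_emod_two (deltaPrime n n' δ)
  have h₁ := @halfTri_of_natAbs_eq_succ (deltaPrime n n' δ) δ
  have h₂ := @halfTri_of_natAbs_eq_succ δ (deltaPrime n n' δ)
  have h₃ := @halfTri_of_natAbs_eq_zero δ
  have h₄ := @halfTri_of_natAbs_eq_zero (deltaPrime n n' δ)
  have hadm : (δ % 2 = 0 ∧ 0 ≤ δ) ∨ (δ % 2 = 1 ∧ δ < 0) :=
    hδ.imp (fun h => ⟨Int.even_iff.1 h.1, h.2⟩) (fun h => ⟨Int.odd_iff.1 h.1, h.2⟩)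
  unfold tauNat
  by_cases hpar : Even (n + n')
  · have hp := Nat.even_iff.1 hpar
    have hδ' : deltaPrime n n' δ = if δ = 0 then 0 else -δ + 1 := by simp [deltaPrime, hpar]
    simp only [hpar, not_true_eq_false, false_implies, and_true, true_implies]
    split_ifs at hδ' <;> omega
  · have hp := Nat.odd_iff.1 (Nat.not_even_iff_odd.1 hpar)
    have hδ' : deltaPrime n n' δ = -δ - 1 := by simp [deltaPrime, hpar]
    simp only [hpar, not_false_eq_true, false_implies, true_implies, true_and]
    omega

end StableRange

section ThetaZero

variable {n n' : ℕ} {δ : ℤ}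

lemma part_zero_lt_of_ne {μ μ' ν ν' : Multiset ℕ} (hμ : ∀ x ∈ μ, 0 < x) (hμ' : ∀ x ∈ μ', 0 < x)
    (hν : ∀ x ∈ ν, 0 < x) (hν' : ∀ x ∈ ν', 0 < x)
    (hμμ' : ∀ i, part μ (i + 1) ≤ part μ' (i + 1)) (hνν' : ∀ j, part ν j ≤ part ν' j)
    (hsum : μ.sum + ν.sum = μ'.sum + ν'.sum) (hne : (μ, ν) ≠ (μ', ν')) :
    part μ' 0 < part μ 0 := by
  by_contra! h₀
  have hle : ∀ i, part μ i ≤ part μ' i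
    | 0 => h₀
    | i + 1 => hμμ' i
  have h₁ := sum_le_sum_of_part_le hle
  have h₂ := sum_le_sum_of_part_le hνν'
  have e₁ : μ = μ' := eq_of_part_le_of_sum_le hμ hμ' hle (by omega)
  have e₂ : ν = ν' := eq_of_part_le_of_sum_le hν hν' hνν' (by omega)
  exact hne (by rw [e₁, e₂])

lemma part_strip_cons_zero {a : ℕ} {μ : Multiset ℕ} (h : μ.sum ≤ a) :
    part (strip (a ::ₘ μ)) 0 = a := by
  rw [part_strip, part_cons_zero ((part_le_sum μ 0).trans h)]

lemma part_strip_cons_succ {a : ℕ} {μ : Multiset ℕ} (h : μ.sum ≤ a) (j : ℕ) :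
    part (strip (a ::ₘ μ)) (j + 1) = part μ j := by
  rw [part_strip, part_cons_succ ((part_le_sum μ 0).trans h)]

lemma preceq_transpose_strip_cons (a : ℕ) (μ : Multiset ℕ) :
    Preceq (transpose μ) (transpose (strip (a ::ₘ μ))) := fun t => by
  rw [transpose_strip, transpose_cons]
  split_ifs <;> omega

lemma thetaBip_zero_of_even (hpar : Even (n + n')) {p : Multiset ℕ × Multiset ℕ}
    (hp : ∀ x ∈ p.1, 0 < x) : thetaBip n n' δ 0 p = (strip (tauNat n n' δ ::ₘ p.2), p.1) := by
  rw [thetaBip, if_pos hpar, Nat.sub_zero, strip_cons_mtail, strip_eq_self hp, Nat.add_zero]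

lemma thetaBip_zero_of_not_even (hpar : ¬ Even (n + n')) {p : Multiset ℕ × Multiset ℕ}
    (hp : ∀ x ∈ p.2, 0 < x) : thetaBip n n' δ 0 p = (p.2, strip (tauNat n n' δ ::ₘ p.1)) := by
  rw [thetaBip, if_neg hpar, Nat.sub_zero, strip_cons_mtail, strip_eq_self hp, Nat.add_zero]

lemma thetaB_thetaBip_zero (hδ : IsAdmissible δ) (hstable : 2 * n ≤ n')
    {p : Multiset ℕ × Multiset ℕ} (hp : p ∈ BipSet n δ) :
    ThetaB n n' δ p (thetaBip n n' δ 0 p) := by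
  obtain ⟨hp₁, hp₂, hps⟩ := hp
  obtain ⟨hτ, -⟩ := stable_range_tauNat (s := p.1.sum + p.2.sum) hδ hstable (by omega)
  by_cases hpar : Even (n + n')
  · rw [thetaBip_zero_of_even hpar hp₁]
    refine ⟨⟨fun x hx => pos_of_mem_strip hx, hp₁, ?_⟩, ?_⟩
    · simp only [sum_strip, Multiset.sum_cons]
      omega
    · rw [PrecCond, if_pos hpar]
      exact ⟨preceq_transpose_strip_cons _ _, fun t => ⟨Nat.le_succ _, le_rfl⟩⟩
  · rw [thetaBip_zero_of_not_even hpar hp₂]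
    refine ⟨⟨hp₂, fun x hx => pos_of_mem_strip hx, ?_⟩, ?_⟩
    · simp only [sum_strip, Multiset.sum_cons]
      omega
    · rw [PrecCond, if_neg hpar]
      exact ⟨preceq_transpose_strip_cons _ _, fun t => ⟨Nat.le_succ _, le_rfl⟩⟩

lemma ordB_lt_ordB_thetaBip_zero_of_even (hδ : IsAdmissible δ) (hstable : 2 * n ≤ n')
    (hpar : Even (n + n')) {p₁ p₂ q₁ q₂ : Multiset ℕ} (hp : (p₁, p₂) ∈ BipSet n δ)
    (hq : ThetaB n n' δ (p₁, p₂) (q₁, q₂)) (hne : (q₁, q₂) ≠ thetaBip n n' δ 0 (p₁, p₂)) :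
    ordB (deltaPrime n n' δ) (q₁, q₂) < ordB (deltaPrime n n' δ) (thetaBip n n' δ 0 (p₁, p₂)) := by
  obtain ⟨hp₁, hp₂, hps⟩ := hp
  obtain ⟨⟨hq₁, hq₂, hqs⟩, hqP⟩ := hq
  rw [PrecCond, if_pos hpar] at hqP
  rw [thetaBip_zero_of_even hpar hp₁] at hne ⊢
  dsimp only at hp₁ hp₂ hps hq₁ hq₂ hqs hqP hne ⊢
  obtain ⟨hτ, hsτ, hdom, -⟩ := stable_range_tauNat (s := p₁.sum + p₂.sum) hδ hstable (by omega)
  have hτ₂ : p₂.sum ≤ tauNat n n' δ := by omega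
  have hμ : ∀ i, part q₁ (i + 1) ≤ part (strip (tauNat n n' δ ::ₘ p₂)) (i + 1) := fun i => by
    rw [part_strip_cons_succ hτ₂]
    exact part_add_le_of_transpose_le (fun t => (hqP.1 t).1) i
  have hν : ∀ j, part q₂ j ≤ part p₁ j :=
    part_add_le_of_transpose_le (k := 0) fun t => (hqP.2 t).2
  have hsum : q₁.sum + q₂.sum = (strip (tauNat n n' δ ::ₘ p₂)).sum + p₁.sum := by
    rw [sum_strip, Multiset.sum_cons]
    omega
  have hle := ordB_add_le_of_dominant_fst (δ := deltaPrime n n' δ) hμ hν hsum (by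
    rw [part_strip_cons_zero hτ₂]
    have := part_le_sum p₁ 0
    have := hdom hpar
    omega)
  have hlt := part_zero_lt_of_ne hq₁ (fun x hx => pos_of_mem_strip hx) hq₂ hp₁ hμ hν hsum hne
  rw [part_strip_cons_zero hτ₂] at hle hlt
  omega

lemma ordB_lt_ordB_thetaBip_zero_of_not_even (hδ : IsAdmissible δ) (hstable : 2 * n ≤ n')
    (hpar : ¬ Even (n + n')) {p₁ p₂ q₁ q₂ : Multiset ℕ} (hp : (p₁, p₂) ∈ BipSet n δ)
    (hq : ThetaB n n' δ (p₁, p₂) (q₁, q₂)) (hne : (q₁, q₂) ≠ thetaBip n n' δ 0 (p₁, p₂)) :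
    ordB (deltaPrime n n' δ) (q₁, q₂) < ordB (deltaPrime n n' δ) (thetaBip n n' δ 0 (p₁, p₂)) := by
  obtain ⟨hp₁, hp₂, hps⟩ := hp
  obtain ⟨⟨hq₁, hq₂, hqs⟩, hqP⟩ := hq
  rw [PrecCond, if_neg hpar] at hqP
  rw [thetaBip_zero_of_not_even hpar hp₂] at hne ⊢
  dsimp only at hp₁ hp₂ hps hq₁ hq₂ hqs hqP hne ⊢
  obtain ⟨hτ, hsτ, -, hdom⟩ := stable_range_tauNat (s := p₁.sum + p₂.sum) hδ hstable (by omega)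
  have hτ₁ : p₁.sum ≤ tauNat n n' δ := by omega
  have hμ : ∀ i, part q₂ (i + 1) ≤ part (strip (tauNat n n' δ ::ₘ p₁)) (i + 1) := fun i => by
    rw [part_strip_cons_succ hτ₁]
    exact part_add_le_of_transpose_le (fun t => (hqP.1 t).1) i
  have hν : ∀ j, part q₁ j ≤ part p₂ j :=
    part_add_le_of_transpose_le (k := 0) fun t => (hqP.2 t).2
  have hsum : q₂.sum + q₁.sum = (strip (tauNat n n' δ ::ₘ p₁)).sum + p₂.sum := by
    rw [sum_strip, Multiset.sum_cons]
    omega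
  have hle := ordB_add_le_of_dominant_snd (δ := deltaPrime n n' δ) hμ hν hsum (by
    rw [part_strip_cons_zero hτ₁]
    have := part_le_sum p₂ 0
    have := hdom hpar
    omega)
  have hlt := part_zero_lt_of_ne hq₂ (fun x hx => pos_of_mem_strip hx) hq₁ hp₂ hμ hν hsum
    fun h => hne (by rw [Prod.mk.injEq] at h ⊢; exact ⟨h.2, h.1⟩)
  rw [part_strip_cons_zero hτ₁] at hle hlt
  omega

lemma ordB_lt_ordB_thetaBip_zero (hδ : IsAdmissible δ) (hstable : 2 * n ≤ n')
    {p q : Multiset ℕ × Multiset ℕ} (hp : p ∈ BipSet n δ) (hq : ThetaB n n' δ p q)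
    (hne : q ≠ thetaBip n n' δ 0 p) :
    ordB (deltaPrime n n' δ) q < ordB (deltaPrime n n' δ) (thetaBip n n' δ 0 p) := by
  obtain ⟨p₁, p₂⟩ := p
  obtain ⟨q₁, q₂⟩ := q
  by_cases hpar : Even (n + n')
  · exact ordB_lt_ordB_thetaBip_zero_of_even hδ hstable hpar hp hq hne
  · exact ordB_lt_ordB_thetaBip_zero_of_not_even hδ hstable hpar hp hq hne

lemma injOn_thetaBip_zero : Set.InjOn (thetaBip n n' δ 0) (BipSet n δ) := by
  rintro r ⟨hr₁, hr₂, -⟩ p ⟨hp₁, hp₂, -⟩ h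
  by_cases hpar : Even (n + n')
  · rw [thetaBip_zero_of_even hpar hp₁, thetaBip_zero_of_even hpar hr₁, Prod.mk.injEq] at h
    have h₂ := strip_cons_injective h.1
    rw [strip_eq_self hr₂, strip_eq_self hp₂] at h₂
    exact Prod.ext h.2 h₂
  · rw [thetaBip_zero_of_not_even hpar hp₂, thetaBip_zero_of_not_even hpar hr₂,
      Prod.mk.injEq] at h
    have h₁ := strip_cons_injective h.2
    rw [strip_eq_self hr₁, strip_eq_self hp₁] at h₁
    exact Prod.ext h₁ h.1

end ThetaZero

section Induction

variable {n n' : ℕ} {δ : ℤ}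

lemma bLt_irrefl (p : Multiset ℕ × Multiset ℕ) : ¬ BLt n n' p p := by
  unfold BLt
  split_ifs <;> rintro (h | ⟨-, i, -, h⟩ | ⟨-, i, -, h⟩) <;> exact lt_irrefl _ h

def lexKey (N : ℕ) (a b : Multiset ℕ) : ℕ ×ₗ Lex (Fin N → ℕ) ×ₗ Lex (Fin N → ℕ) :=
  toLex (a.sum, toLex (toLex fun i => part a i, toLex fun i => part b i))

lemma toLex_part_lt_of_partLexLt {N : ℕ} {μ ν : Multiset ℕ} (h : PartLexLt μ ν)
    (hν : ν.card < N) : toLex (fun i : Fin N => part μ i) < toLex (fun i : Fin N => part ν i) := by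
  obtain ⟨i, hpre, hlt⟩ := h
  exact ⟨⟨i, (lt_card_of_part_pos (by omega)).trans hν⟩, fun j hj => hpre j hj, hlt⟩

lemma lexKey_lt_lexKey {N : ℕ} {a b a' b' : Multiset ℕ} (ha' : a'.card < N) (hb' : b'.card < N)
    (h : a.sum < a'.sum ∨ (a.sum = a'.sum ∧ PartLexLt a a') ∨ (a = a' ∧ PartLexLt b b')) :
    lexKey N a b < lexKey N a' b' := by
  simp only [lexKey, Prod.Lex.toLex_lt_toLex]
  rcases h with h | ⟨h, h'⟩ | ⟨rfl, h'⟩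
  · exact Or.inl h
  · exact Or.inr ⟨h, Or.inl (toLex_part_lt_of_partLexLt h' ha')⟩
  · exact Or.inr ⟨rfl, Or.inr ⟨rfl, toLex_part_lt_of_partLexLt h' hb'⟩⟩

/-- The bound `n + 1` on the number of compared parts comes from `|μ| + |ν| ≤ n` on `BipSet n δ`. -/
def bLtKey (n n' : ℕ) (p : Multiset ℕ × Multiset ℕ) :
    ℕ ×ₗ Lex (Fin (n + 1) → ℕ) ×ₗ Lex (Fin (n + 1) → ℕ) :=
  if Even (n + n') then lexKey (n + 1) p.1 p.2 else lexKey (n + 1) p.2 p.1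

lemma bLtKey_lt_bLtKey {p r : Multiset ℕ × Multiset ℕ} (hp : p ∈ BipSet n δ)
    (h : BLt n n' r p) : bLtKey n n' r < bLtKey n n' p := by
  obtain ⟨hp₁, hp₂, hps⟩ := hp
  have h₁ := card_le_sum_of_pos hp₁
  have h₂ := card_le_sum_of_pos hp₂
  unfold BLt at h
  unfold bLtKey
  split_ifs at h ⊢
  · exact lexKey_lt_lexKey (by omega) (by omega) h
  · exact lexKey_lt_lexKey (by omega) (by omega) h

lemma wellFounded_bLt (n n' : ℕ) (δ : ℤ) :
    WellFounded fun r p => p ∈ BipSet n δ ∧ BLt n n' r p :=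
  Subrelation.wf (fun h => bLtKey_lt_bLtKey h.1 h.2) (InvImage.wf (bLtKey n n') wellFounded_lt)

/-- Once `θ̄ = θ₀` below `p`, the injectivity of `θ₀` keeps `θ₀(p)` in `Θ♭(p)`, where it is the
unique element of maximal `ord`. -/
lemma isThetaBar_apply_eq_thetaBip_zero (hδ : IsAdmissible δ) (hstable : 2 * n ≤ n')
    {bar : Multiset ℕ × Multiset ℕ → Option (Multiset ℕ × Multiset ℕ)}
    (hbar : IsThetaBar n n' δ bar) {p : Multiset ℕ × Multiset ℕ} (hp : p ∈ BipSet n δ)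
    (ih : ∀ r ∈ BipSet n δ, BLt n n' r p → bar r = some (thetaBip n n' δ 0 r)) :
    bar p = some (thetaBip n n' δ 0 p) := by
  have hflat : InFlat n n' δ bar p (thetaBip n n' δ 0 p) := by
    refine ⟨thetaB_thetaBip_zero hδ hstable hp, fun r hr hrp hbar_r => ?_⟩
    rw [ih r hr hrp, Option.some_inj] at hbar_r
    rw [injOn_thetaBip_zero hr hp hbar_r] at hrp
    exact bLt_irrefl p hrp
  obtain ⟨q, hq⟩ := (hbar.2 p hp).1 ⟨_, hflat⟩
  obtain ⟨hq_flat, hq_max, -⟩ := (hbar.2 p hp).2 q hq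
  by_contra hne
  exact (hq_max _ hflat).not_gt
    (ordB_lt_ordB_thetaBip_zero hδ hstable hp hq_flat.1 fun h => hne (h ▸ hq))

end Induction

/-- In the stable range `n ≤ ⌊n'/2⌋`, `θ̄(Λ)` is defined and equals `θ_0(Λ)` for
every `Λ ∈ S_{n,δ}`. -/
theorem statement16 (n n' : ℕ) (δ : ℤ) (hδ : IsAdmissible δ) (h : n ≤ n' / 2) :
    ∀ bar : Multiset ℕ × Multiset ℕ → Option (Multiset ℕ × Multiset ℕ),
      IsThetaBar n n' δ bar → ∀ p ∈ BipSet n δ, bar p = some (thetaBip n n' δ 0 p) := by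
  intro bar hbar p
  have hstable : 2 * n ≤ n' := by omega
  induction p using (wellFounded_bLt n n' δ).induction with
  | _ p ih =>
    exact fun hp => isThetaBar_apply_eq_thetaBip_zero hδ hstable hbar hp
      fun r hr hrp => ih r ⟨hp, hrp⟩ hr

end PanUnitary
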